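/- Let c be the real cube root of 3, and for real Λ ≥ 1 and ρ ∈ ℝ set a₋(ρ) := −2Λ⁹ + cΛρ, C(ρ) := (3/4)Λ¹² − cΛ⁴ρ, and Θ̂₋(z) := (Λ³z)⁴/4 − (3Λ⁶/2)(Λ³z)² − a₋(ρ)·Λ³z − C(ρ) for z ∈ ℂ. Let K₁ ∈ ℝ. Then there exists Λ₀ ≥ 1 such that for all Λ ≥ Λ₀, all real ρ ≥ K₁, both signs ε ∈ {+1,−1}, and all t ≥ 0, writing z_t := 1 + e^{iεπ/4}(t + Λ^{−3}): Re Θ̂₋(z_t) ≤ −(Λ¹²/4) t⁴ − (√2/2)Λ³ + (√2/2) c |K₁| Λ. Consequently, for every real p ≥ 1, ( ∫₀^∞ exp( p · Re Θ̂₋(z_t) ) dt )^{1/p} ≤ e^{−(√2/2)Λ³ + (√2/2) c |K₁| Λ}, and the same bound holds for the supremum over t ≥ 0 of |e^{Θ̂₋(z_t)}|. -/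

import Mathlib

open Complex Real MeasureTheory

/-- The rescaled, recentered Pearcey phase
`Θ̂₋(z) = Θ_{a₋(ρ)}(3Λ⁶; Λ³z) − C(ρ)` with `a₋(ρ) = −2Λ⁹ + cΛρ` and
`C(ρ) = (3/4)Λ¹² − cΛ⁴ρ`. -/
noncomputable def thetaHatMinus (c Λ ρ : ℝ) (z : ℂ) : ℂ :=
  ((Λ : ℂ) ^ 3 * z) ^ 4 / 4 - ((3 * (Λ : ℂ) ^ 6) / 2) * ((Λ : ℂ) ^ 3 * z) ^ 2
    - ((-2 * Λ ^ 9 + c * Λ * ρ : ℝ) : ℂ) * ((Λ : ℂ) ^ 3 * z)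
    - ((3 / 4 * Λ ^ 12 - c * Λ ^ 4 * ρ : ℝ) : ℂ)

private lemma theta_re (c Λ ρ x y : ℝ) :
    (thetaHatMinus c Λ ρ (1 + ((x : ℂ) + (y : ℂ) * I))).re
      = Λ^12*(x^3 - 3*x*y^2 + (x^4 - 6*x^2*y^2 + y^4)/4) - c*Λ^4*ρ*x := by
  have h : thetaHatMinus c Λ ρ (1 + ((x : ℂ) + (y : ℂ) * I))
      = ((Λ^12*(x^3 - 3*x*y^2 + (x^4 - 6*x^2*y^2 + y^4)/4) - c*Λ^4*ρ*x : ℝ) : ℂ)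
        + ((Λ^12*(3*x^2*y - y^3 + x^3*y - x*y^3) - c*Λ^4*ρ*y : ℝ) : ℂ) * I := by
    unfold thetaHatMinus
    push_cast
    linear_combination ((Λ:ℂ)^12*(3*(x:ℂ)*(y:ℂ)^2+(y:ℂ)^3*I)
      + (Λ:ℂ)^12/4*(6*(x:ℂ)^2*(y:ℂ)^2+4*(x:ℂ)*(y:ℂ)^3*I+(y:ℂ)^4*I^2-(y:ℂ)^4)) * Complex.I_sq
  rw [h]
  simp only [Complex.add_re, Complex.mul_re, Complex.I_re, Complex.I_im,
    Complex.ofReal_re, Complex.ofReal_im]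
  ring

private lemma exp_pi_div_four (ε : ℝ) (hε : ε = 1 ∨ ε = -1) :
    Complex.exp (I * (ε : ℂ) * (π : ℂ) / 4)
      = ((Real.sqrt 2 / 2 : ℝ) : ℂ) + ((ε * (Real.sqrt 2 / 2) : ℝ) : ℂ) * I := by
  have h : I * (ε : ℂ) * (π : ℂ) / 4 = ((ε * π / 4 : ℝ) : ℂ) * I := by push_cast; ring
  rw [h, Complex.exp_mul_I]
  rcases hε with rfl | rfl
  · rw [show ((1:ℝ) * π / 4 : ℝ) = π/4 by ring, ← Complex.ofReal_cos, ← Complex.ofReal_sin,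
      Real.cos_pi_div_four, Real.sin_pi_div_four]
    push_cast; ring
  · rw [show ((-1:ℝ) * π / 4 : ℝ) = -(π/4) by ring, ← Complex.ofReal_cos, ← Complex.ofReal_sin,
      Real.cos_neg, Real.sin_neg, Real.cos_pi_div_four, Real.sin_pi_div_four]
    push_cast; ring

private lemma re_at (c Λ ρ ε s : ℝ) (hε : ε = 1 ∨ ε = -1) :
    (thetaHatMinus c Λ ρ (1 + Complex.exp (I * (ε : ℂ) * (π : ℂ) / 4) * ((s : ℝ) : ℂ))).re
      = -(Real.sqrt 2/2) * Λ^12 * s^3 - Λ^12/4 * s^4 - (Real.sqrt 2/2) * c * Λ^4 * ρ * s := by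
  have hz : 1 + Complex.exp (I * (ε : ℂ) * (π : ℂ) / 4) * ((s : ℝ) : ℂ)
      = 1 + (((Real.sqrt 2/2 * s : ℝ) : ℂ) + ((ε * (Real.sqrt 2/2) * s : ℝ) : ℂ) * I) := by
    rw [exp_pi_div_four ε hε]; push_cast; ring
  rw [hz, theta_re]
  set r := Real.sqrt 2 / 2 with hrdef
  have hr : r^2 = 1/2 := by
    rw [hrdef, div_pow, Real.sq_sqrt (by norm_num : (0:ℝ) ≤ 2)]; norm_num
  have he : ε^2 = 1 := by rcases hε with rfl | rfl <;> norm_num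
  linear_combination (Λ^12*(-3*r^3*s^3) + Λ^12/4*(r^4*s^4*(ε^2-5))) * he
    + (Λ^12*(-2*r*s^3) + Λ^12/4*(-4*s^4*(r^2+1/2))) * hr

private lemma real_bound (c k Λ ρ t u r : ℝ) (hc : 0 ≤ c) (hk : 0 ≤ k)
    (hρ : -k ≤ ρ) (hr0 : 0 ≤ r) (ht : 0 ≤ t) (hu0 : 0 ≤ u) (hu : Λ^3 * u = 1)
    (hΛ0 : 0 < Λ) (hΛsq : 1 + c*k ≤ Λ^2) :
    -r*Λ^12*(t+u)^3 - Λ^12/4*(t+u)^4 - r*c*Λ^4*ρ*(t+u)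
      ≤ -(Λ^12/4)*t^4 - r*Λ^4*t - (r*Λ^3 - r*c*k*Λ) := by
  have hs0 : 0 ≤ t + u := add_nonneg ht hu0
  have hu6 : Λ^6*u^2 = 1 := by linear_combination (Λ^3*u + 1) * hu
  have hu9 : Λ^9*u^3 = 1 := by linear_combination (Λ^6*u^2 + Λ^3*u + 1) * hu
  have hu4 : Λ^4*u = Λ := by linear_combination Λ * hu
  -- handle the ρ term
  have ha : (-ρ) * (t+u) ≤ k * (t+u) := mul_le_mul_of_nonneg_right (by linarith) hs0
  have hb : r*c*Λ^4 * ((-ρ)*(t+u)) ≤ r*c*Λ^4 * (k*(t+u)) :=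
    mul_le_mul_of_nonneg_left ha (by positivity)
  -- cube expansion
  have hcube : Λ^12*(t+u)^3 = Λ^12*t^3 + 3*Λ^9*t^2 + 3*Λ^6*t + Λ^3 := by
    linear_combination (3*Λ^9*t^2)*hu + (3*Λ^6*t)*hu6 + (Λ^3)*hu9
  have hcube_r : r*(Λ^12*(t+u)^3) = r*(Λ^12*t^3 + 3*Λ^9*t^2 + 3*Λ^6*t + Λ^3) := by
    rw [hcube]
  have hu4_r : r*c*k*(Λ^4*u) = r*c*k*Λ := by rw [hu4]
  have hquart : t^4 ≤ (t+u)^4 := pow_le_pow_left₀ ht (by linarith) 4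
  have hquart' : Λ^12/4 * t^4 ≤ Λ^12/4 * (t+u)^4 :=
    mul_le_mul_of_nonneg_left hquart (by positivity)
  have h6 : (1 + c*k)*Λ^4 ≤ Λ^6 := by
    nlinarith [mul_le_mul_of_nonneg_left hΛsq (pow_nonneg hΛ0.le 4)]
  have hkey : r*c*k*Λ^4*t + r*Λ^4*t ≤ 3*r*Λ^6*t := by
    nlinarith [mul_le_mul_of_nonneg_left h6 (mul_nonneg hr0 ht),
      mul_nonneg (mul_nonneg hr0 ht) (pow_nonneg hΛ0.le 6)]
  have hA : (0:ℝ) ≤ r*(Λ^12*t^3) := by positivity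
  have hB : (0:ℝ) ≤ r*(Λ^9*t^2) := by positivity
  nlinarith [hb, hcube_r, hu4_r, hquart', hkey, hA, hB]



/-- Lemma 5.8 of the paper: on the part `γ_{R,e}` of `γ_R` outside the disk
`|z − 1| ≤ Λ^{−3}`, parametrized by `z_t = 1 + e^{±iπ/4}(t + Λ^{−3})`, `t ≥ 0`,
one has `Re Θ̂₋(z_t) ≤ −(Λ¹²/4)t⁴ − (√2/2)Λ³ + (√2/2)c|K₁|Λ` for all large `Λ`,
uniformly in `ρ ≥ K₁`; hence `e^{Θ̂₋}` is exponentially small in every `L^p`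
norm, `1 ≤ p ≤ ∞`. -/
theorem stmt13 (c : ℝ) (hc3 : c ^ 3 = 3) (hc : 0 < c) (K₁ : ℝ) :
    ∃ Λ₀ : ℝ, 1 ≤ Λ₀ ∧ ∀ Λ : ℝ, Λ₀ ≤ Λ → ∀ ρ : ℝ, K₁ ≤ ρ →
      ∀ ε : ℝ, (ε = 1 ∨ ε = -1) →
        (∀ t : ℝ, 0 ≤ t →
          (thetaHatMinus c Λ ρ
              (1 + Complex.exp (I * (ε : ℂ) * (π : ℂ) / 4) * ((t + Λ⁻¹ ^ 3 : ℝ) : ℂ))).re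
            ≤ -(Λ ^ 12 / 4) * t ^ 4 - (Real.sqrt 2 / 2) * Λ ^ 3
              + (Real.sqrt 2 / 2) * c * |K₁| * Λ) ∧
        (∀ p : ℝ, 1 ≤ p →
          (∫ t in Set.Ioi (0 : ℝ),
              Real.exp (p * (thetaHatMinus c Λ ρ
                (1 + Complex.exp (I * (ε : ℂ) * (π : ℂ) / 4) * ((t + Λ⁻¹ ^ 3 : ℝ) : ℂ))).re))
            ^ (1 / p)
            ≤ Real.exp (-(Real.sqrt 2 / 2) * Λ ^ 3
                + (Real.sqrt 2 / 2) * c * |K₁| * Λ)) ∧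
        (∀ t : ℝ, 0 ≤ t →
          ‖(Complex.exp (thetaHatMinus c Λ ρ
              (1 + Complex.exp (I * (ε : ℂ) * (π : ℂ) / 4) * ((t + Λ⁻¹ ^ 3 : ℝ) : ℂ))))‖
            ≤ Real.exp (-(Real.sqrt 2 / 2) * Λ ^ 3
                + (Real.sqrt 2 / 2) * c * |K₁| * Λ)) := by
  have habs : 0 ≤ |K₁| := abs_nonneg K₁
  refine ⟨2 + c * |K₁|, by nlinarith, ?_⟩
  intro Λ hΛ ρ hρ ε hε
  have hck : 0 ≤ c * |K₁| := mul_nonneg hc.le habs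
  have hΛ2 : 2 ≤ Λ := by linarith
  have hΛ0 : 0 < Λ := by linarith
  have hΛsq : 1 + c * |K₁| ≤ Λ^2 := by nlinarith
  set r := Real.sqrt 2 / 2 with hrdef
  have hr0 : 0 < r := by
    rw [hrdef]; positivity
  have hr1 : 1/2 ≤ r := by
    rw [hrdef]
    nlinarith [Real.sq_sqrt (by norm_num : (0:ℝ) ≤ 2), Real.sqrt_nonneg 2]
  have hρ' : -|K₁| ≤ ρ := le_trans (neg_abs_le K₁) hρ
  have hu0 : (0:ℝ) ≤ Λ⁻¹ ^ 3 := by positivity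
  have hu : Λ^3 * Λ⁻¹ ^ 3 = 1 := by
    rw [← mul_pow, mul_inv_cancel₀ hΛ0.ne']; norm_num
  -- the master pointwise bound
  have hbound : ∀ t : ℝ, 0 ≤ t →
      (thetaHatMinus c Λ ρ
          (1 + Complex.exp (I * (ε : ℂ) * (π : ℂ) / 4) * ((t + Λ⁻¹ ^ 3 : ℝ) : ℂ))).re
        ≤ -(Λ^12/4)*t^4 - r*Λ^4*t - (r*Λ^3 - r * c * |K₁| * Λ) := by
    intro t ht
    rw [re_at c Λ ρ ε (t + Λ⁻¹ ^ 3) hε, ← hrdef]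
    have := real_bound c |K₁| Λ ρ t (Λ⁻¹ ^ 3) r hc.le habs hρ' hr0.le ht hu0 hu hΛ0 hΛsq
    linarith
  refine ⟨?_, ?_, ?_⟩
  · intro t ht
    have h1 := hbound t ht
    have h2 : 0 ≤ r*Λ^4*t := by positivity
    linarith
  · intro p hp
    have hp0 : 0 < p := by linarith
    set B := r*Λ^3 - r * c * |K₁| * Λ with hBdef
    have h16 : (16:ℝ) ≤ Λ^4 := by nlinarith [pow_le_pow_left₀ (by norm_num : (0:ℝ) ≤ 2) hΛ2 4]
    have h8 : (8:ℝ) ≤ r * Λ^4 := by nlinarith [mul_le_mul hr1 h16 (by norm_num : (0:ℝ) ≤ 16) hr0.le]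
    have hpa : 1 ≤ p * (r * Λ^4) := by
      nlinarith [mul_le_mul hp h8 (by norm_num : (0:ℝ) ≤ 8) (by linarith : (0:ℝ) ≤ p)]
    -- pointwise: p * Re ≤ -p*B - t  on t > 0
    have hpt : ∀ t : ℝ, 0 < t →
        p * (thetaHatMinus c Λ ρ
            (1 + Complex.exp (I * (ε : ℂ) * (π : ℂ) / 4) * ((t + Λ⁻¹ ^ 3 : ℝ) : ℂ))).re
          ≤ -p*B - t := by
      intro t ht
      have h1 := hbound t ht.le
      have h2 : p * (thetaHatMinus c Λ ρ
            (1 + Complex.exp (I * (ε : ℂ) * (π : ℂ) / 4) * ((t + Λ⁻¹ ^ 3 : ℝ) : ℂ))).re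
          ≤ p * (-(Λ^12/4)*t^4 - r*Λ^4*t - B) := mul_le_mul_of_nonneg_left h1 hp0.le
      have h3 : 0 ≤ p * ((Λ^12/4)*t^4) := by positivity
      have h4 : t ≤ p * (r*Λ^4*t) := by nlinarith
      nlinarith
    have hInt : IntegrableOn (fun t : ℝ => Real.exp (-p*B) * Real.exp (-t)) (Set.Ioi 0) := by
      have := (exp_neg_integrableOn_Ioi 0 (by norm_num : (0:ℝ) < 1)).const_mul (Real.exp (-p*B))
      simpa [IntegrableOn] using this
    have hmono : (∫ t in Set.Ioi (0:ℝ),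
        Real.exp (p * (thetaHatMinus c Λ ρ
          (1 + Complex.exp (I * (ε : ℂ) * (π : ℂ) / 4) * ((t + Λ⁻¹ ^ 3 : ℝ) : ℂ))).re))
        ≤ ∫ t in Set.Ioi (0:ℝ), Real.exp (-p*B) * Real.exp (-t) := by
      apply integral_mono_of_nonneg
      · exact Filter.Eventually.of_forall fun t => (Real.exp_pos _).le
      · exact hInt
      · refine (ae_restrict_iff' measurableSet_Ioi).mpr (Filter.Eventually.of_forall ?_)
        intro t ht
        dsimp only
        rw [← Real.exp_add]
        exact Real.exp_le_exp.mpr (by have := hpt t ht; linarith)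
    have hval : (∫ t in Set.Ioi (0:ℝ), Real.exp (-p*B) * Real.exp (-t)) = Real.exp (-p*B) := by
      rw [MeasureTheory.integral_const_mul]
      simp only [integral_exp_neg_Ioi_zero, mul_one]
    have hnn : 0 ≤ (∫ t in Set.Ioi (0:ℝ),
        Real.exp (p * (thetaHatMinus c Λ ρ
          (1 + Complex.exp (I * (ε : ℂ) * (π : ℂ) / 4) * ((t + Λ⁻¹ ^ 3 : ℝ) : ℂ))).re)) :=
      integral_nonneg fun t => (Real.exp_pos _).le
    have hle : (∫ t in Set.Ioi (0:ℝ),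
        Real.exp (p * (thetaHatMinus c Λ ρ
          (1 + Complex.exp (I * (ε : ℂ) * (π : ℂ) / 4) * ((t + Λ⁻¹ ^ 3 : ℝ) : ℂ))).re))
        ≤ Real.exp (-p*B) := hval ▸ hmono
    calc (∫ t in Set.Ioi (0:ℝ),
        Real.exp (p * (thetaHatMinus c Λ ρ
          (1 + Complex.exp (I * (ε : ℂ) * (π : ℂ) / 4) * ((t + Λ⁻¹ ^ 3 : ℝ) : ℂ))).re)) ^ (1/p)
        ≤ (Real.exp (-p*B)) ^ (1/p) :=
          Real.rpow_le_rpow hnn hle (by positivity)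
      _ = Real.exp (-(Real.sqrt 2 / 2) * Λ ^ 3 + (Real.sqrt 2 / 2) * c * |K₁| * Λ) := by
          rw [← Real.exp_mul]
          congr 1
          field_simp [hBdef]
          ring
  · intro t ht
    rw [Complex.norm_exp]
    apply Real.exp_le_exp.mpr
    have h1 := hbound t ht
    have h2 : 0 ≤ r*Λ^4*t := by positivity
    have h3 : 0 ≤ (Λ^12/4)*t^4 := by positivity
    linarith
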